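/- Let m ≥ 2 and h ≥ 1, and let T(m,h) be the complete m-ary tree of height h. Then for every depth-1 vertex v, Gain(T(m,h), μ1, Z(root)) = Gain(T(m,h), μ1, Z(v)) = m^{h+1}(m^h−1)/(m^{h+2}−m^{h+1}+m^h−1). -/

import Mathlib

/-- The competitive-diffusion payoff of Player 1 with starting vertex `x` against
starting vertex `y`: the number of vertices strictly closer to `x` than to `y`. -/
noncomputable def gain {V : Type*} (G : SimpleGraph V) (x y : V) : ℕ :=
  {u : V | G.dist u x < G.dist u y}.ncard

/-- The expected gain of Player 1 playing mixed strategy `X` against mixed strategy `Y`. -/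
noncomputable def Gain {V : Type*} (G : SimpleGraph V) [Fintype V] (X Y : V → ℝ) : ℝ :=
  ∑ x : V, ∑ y : V, X x * Y y * (gain G x y : ℝ)

/-- The pure strategy `Z(v)` concentrated on vertex `v`. -/
def pureStrat {V : Type*} [DecidableEq V] (v : V) : V → ℝ := fun u => if u = v then 1 else 0

/-- Vertices of the complete `m`-ary tree of height `h`: lists over `Fin m` of length
at most `h`; the length of the list is the depth of the vertex. -/
def TreeVert (m h : ℕ) := {l : List (Fin m) // l.length ≤ h}

noncomputable instance (m h : ℕ) : Fintype (TreeVert m h) :=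
  (List.finite_length_le (Fin m) h).fintype

instance (m h : ℕ) : DecidableEq (TreeVert m h) := Subtype.instDecidableEq

instance (m h : ℕ) : Nonempty (TreeVert m h) := ⟨⟨[], by simp⟩⟩

/-- The complete `m`-ary tree of height `h`: each vertex of depth `< h` has exactly
`m` children, obtained by prepending an element of `Fin m`. -/
def CompleteTree (m h : ℕ) : SimpleGraph (TreeVert m h) :=
  SimpleGraph.fromRel (fun x y => x.1 = y.1.tail ∧ y.1.length = x.1.length + 1)

/-- The root of the complete `m`-ary tree. -/
def root (m h : ℕ) : TreeVert m h := ⟨[], by simp⟩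

noncomputable def alpha1 (m h : ℕ) : ℝ :=
  ((m : ℝ) ^ h - 1) / ((m : ℝ) ^ (h + 2) - (m : ℝ) ^ (h + 1) + (m : ℝ) ^ h - 1)

noncomputable def beta1 (m h : ℕ) : ℝ :=
  ((m : ℝ) - 1) * (m : ℝ) ^ h / ((m : ℝ) ^ (h + 2) - (m : ℝ) ^ (h + 1) + (m : ℝ) ^ h - 1)

noncomputable def alpha2 (m h : ℕ) : ℝ :=
  ((m : ℝ) - 1) * ((m : ℝ) ^ (h + 1) - (m : ℝ) ^ h + 1) /
    ((m : ℝ) ^ (h + 2) - (m : ℝ) ^ (h + 1) + (m : ℝ) ^ h - 1)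

noncomputable def beta2 (m h : ℕ) : ℝ :=
  ((m : ℝ) ^ h - 1) / ((m : ℝ) ^ (h + 2) - (m : ℝ) ^ (h + 1) + (m : ℝ) ^ h - 1)

/-- The mixed strategy `μ₁`: probability `α₁` on the root, `β₁` on each depth-1 vertex. -/
noncomputable def mu1 (m h : ℕ) : TreeVert m h → ℝ := fun v =>
  if v.1.length = 0 then alpha1 m h else if v.1.length = 1 then beta1 m h else 0

/-- The mixed strategy `μ₂`: probability `α₂` on the root, `β₂` on each depth-1 vertex. -/
noncomputable def mu2 (m h : ℕ) : TreeVert m h → ℝ := fun v =>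
  if v.1.length = 0 then alpha2 m h else if v.1.length = 1 then beta2 m h else 0

/-!
In `T(m, h)` the distance to the root is the depth, and the distance to a depth-one vertex `[i]`
is the depth minus one inside the subtree below `[i]` and the depth plus one outside it. Both are
certified by a potential that changes by at most one along edges and drops by exactly the length
of an explicit walk. Hence `[j]` wins exactly its own subtree, of size
`s = 1 + m + ⋯ + m^(h-1)`, against the root or against another `[i]`, while the root wins the
`m^h` vertices outside the subtree of `[i]` against `[i]`. So the two gains are `m β₁ s` and
`α₁ m^h + (m - 1) β₁ s`; they agree since `β₁ s = α₁ m^h`, and `(m - 1) s = m^h - 1` gives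
their value.
-/

open Finset

namespace SimpleGraph

variable {V : Type*} {G : SimpleGraph V}

theorem Walk.le_length_add_of_adj {f : V → ℕ} (hf : ∀ x y, G.Adj x y → f x ≤ f y + 1)
    {u v : V} (p : G.Walk u v) : f u ≤ p.length + f v := by
  induction p with
  | nil => simp
  | cons hadj _ ih => have := hf _ _ hadj; rw [Walk.length_cons]; omega

theorem dist_eq_length_of_adj_le {f : V → ℕ} (hf : ∀ x y, G.Adj x y → f x ≤ f y + 1)
    {u v : V} (p : G.Walk u v) (hp : f u = p.length + f v) : G.dist u v = p.length := by
  obtain ⟨q, hq⟩ := p.reachable.exists_walk_length_eq_dist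
  have := q.le_length_add_of_adj hf
  have := dist_le p
  omega

end SimpleGraph

theorem Gain_pureStrat {V : Type*} [Fintype V] [DecidableEq V] (G : SimpleGraph V)
    (X : V → ℝ) (y : V) : Gain G X (pureStrat y) = ∑ x, X x * gain G x y := by
  simp [Gain, pureStrat]

theorem gain_self {V : Type*} (G : SimpleGraph V) (x : V) : gain G x x = 0 := by
  simp [gain]

theorem Nat.card_list_length_le (α : Type*) [Fintype α] (k : ℕ) :
    Nat.card {l : List α // l.length ≤ k} = ∑ i ∈ range (k + 1), Fintype.card α ^ i := by
  induction k with
  | zero =>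
    have : Unique {l : List α // l.length ≤ 0} :=
      ⟨⟨⟨[], le_rfl⟩⟩, fun l => Subtype.ext (List.length_eq_zero_iff.mp (Nat.le_zero.mp l.2))⟩
    simp
  | succ k ih =>
    have : Finite {l : List α // l.length ≤ k} := (List.finite_length_le α k).to_subtype
    let e : {l : List α // l.length ≤ k + 1} ≃ Option (α × {l : List α // l.length ≤ k}) :=
      { toFun := fun
          | ⟨[], _⟩ => none
          | ⟨a :: t, ht⟩ => some (a, ⟨t, Nat.le_of_succ_le_succ ht⟩)
        invFun := fun
          | none => ⟨[], Nat.zero_le _⟩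
          | some (a, ⟨t, ht⟩) => ⟨a :: t, Nat.succ_le_succ ht⟩
        left_inv := by rintro ⟨_ | ⟨a, t⟩, _⟩ <;> rfl
        right_inv := by rintro (_ | ⟨a, t, _⟩) <;> rfl }
    rw [Nat.card_congr e, Finite.card_option, Nat.card_prod, Nat.card_eq_fintype_card, ih,
      geom_sum_succ (n := k + 1)]

namespace CompleteTree

open SimpleGraph

variable {m h : ℕ}

theorem adj_iff {x y : TreeVert m h} :
    (CompleteTree m h).Adj x y ↔ (∃ a, x.1 = a :: y.1) ∨ ∃ a, y.1 = a :: x.1 := by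
  have key : ∀ x y : List (Fin m),
      (x = y.tail ∧ y.length = x.length + 1) ↔ ∃ a, y = a :: x := by
    rintro x (_ | ⟨b, t⟩)
    · simp
    · constructor
      · rintro ⟨rfl, -⟩
        exact ⟨b, rfl⟩
      · rintro ⟨a, ha⟩
        obtain ⟨rfl, rfl⟩ := List.cons.inj ha
        simp
  rw [CompleteTree, fromRel_adj, key, key, or_comm, and_iff_right_iff_imp]
  rintro (⟨a, ha⟩ | ⟨a, ha⟩) rfl <;> simp at ha

theorem adj_of_cons {x y : TreeVert m h} {a : Fin m} (hy : y.1 = a :: x.1) :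
    (CompleteTree m h).Adj y x :=
  adj_iff.mpr (Or.inl ⟨a, hy⟩)

theorem le_add_one_of_adj {f : TreeVert m h → ℕ}
    (hf : ∀ (a : Fin m) (x y : TreeVert m h), y.1 = a :: x.1 → f x ≤ f y + 1 ∧ f y ≤ f x + 1)
    (x y : TreeVert m h) (hxy : (CompleteTree m h).Adj x y) : f x ≤ f y + 1 := by
  rcases adj_iff.mp hxy with ⟨a, ha⟩ | ⟨a, ha⟩
  exacts [(hf a y x ha).2, (hf a x y ha).1]

theorem exists_walk_of_eq_append (l t : List (Fin m)) (u : TreeVert m h) (hu : u.1 = l ++ t)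
    (ht : t.length ≤ h) :
    ∃ p : (CompleteTree m h).Walk u (⟨t, ht⟩ : TreeVert m h), p.length = l.length := by
  induction l generalizing u with
  | nil => obtain rfl : u = ⟨t, ht⟩ := Subtype.ext hu; exact ⟨Walk.nil, rfl⟩
  | cons a l ih =>
    have hlt : (l ++ t).length ≤ h := by have := u.2; simp [hu] at this ⊢; omega
    obtain ⟨p, hp⟩ := ih ⟨l ++ t, hlt⟩ rfl
    exact ⟨.cons (adj_of_cons (x := ⟨l ++ t, hlt⟩) hu) p,
      (Walk.length_cons _ p).trans (by rw [hp]; rfl)⟩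

theorem dist_root (u : TreeVert m h) : (CompleteTree m h).dist u (root m h) = u.1.length := by
  obtain ⟨p, hp⟩ := exists_walk_of_eq_append u.1 [] u (by simp) (by simp)
  have hf : ∀ x y, (CompleteTree m h).Adj x y → x.1.length ≤ y.1.length + 1 :=
    le_add_one_of_adj fun a x y hy => by simp only [hy, List.length_cons]; omega
  rw [← hp]
  exact dist_eq_length_of_adj_le hf p (by simp [hp])

def depthOne (hh : 1 ≤ h) (i : Fin m) : TreeVert m h := ⟨[i], by simpa using hh⟩

/-- Children are obtained by prepending, so the subtree below `[i]` consists of the lists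
ending in `i`. -/
def subtree (i : Fin m) : Set (TreeVert m h) := {u | [i] <:+ u.1}

theorem one_le_length_of_mem_subtree {i : Fin m} {u : TreeVert m h} (hu : u ∈ subtree i) :
    1 ≤ u.1.length := by
  simpa using hu.length_le

theorem eq_of_mem_subtree {i j : Fin m} {u : TreeVert m h} (hi : u ∈ subtree i)
    (hj : u ∈ subtree j) : i = j := by
  simp only [subtree, Set.mem_ofPred_eq, List.singleton_suffix_iff_getLast?_eq_some] at hi hj
  exact Option.some_injective _ (hi.symm.trans hj)

open Classical in
theorem dist_depthOne (hh : 1 ≤ h) (i : Fin m) (u : TreeVert m h) :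
    (CompleteTree m h).dist u (depthOne hh i) =
      if u ∈ subtree i then u.1.length - 1 else u.1.length + 1 := by
  set f : TreeVert m h → ℕ := fun u => if u ∈ subtree i then u.1.length - 1 else u.1.length + 1
  have hf : ∀ x y, (CompleteTree m h).Adj x y → f x ≤ f y + 1 :=
    le_add_one_of_adj fun a x y hy => by
      have hsub : y ∈ subtree i ↔ [i] = a :: x.1 ∨ x ∈ subtree i := by
        simp only [subtree, Set.mem_ofPred_eq, hy, List.suffix_cons_iff]
      have hlen : x ∈ subtree i → 1 ≤ x.1.length := one_le_length_of_mem_subtree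
      simp only [f, hy, List.length_cons, hsub]
      split_ifs <;> grind
  have hfi : f (depthOne hh i) = 0 := by simp [f, subtree, depthOne]
  change _ = f u
  by_cases hu : u ∈ subtree i
  · obtain ⟨l, hl⟩ := id hu
    obtain ⟨p, hp⟩ : ∃ p : (CompleteTree m h).Walk u (depthOne hh i), p.length = l.length :=
      exists_walk_of_eq_append l [i] u hl.symm _
    have hfu : f u = l.length := by simp [f, hu, ← hl]
    rw [dist_eq_length_of_adj_le hf p (by rw [hfu, hfi, hp]; rfl), hp, hfu]
  · obtain ⟨p, hp⟩ : ∃ p : (CompleteTree m h).Walk u (root m h), p.length = u.1.length :=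
      exists_walk_of_eq_append u.1 [] u (by simp) _
    let q := p.concat (adj_of_cons (y := depthOne hh i) (x := root m h) rfl).symm
    have hq : q.length = f u := by simp [q, f, hu, Walk.length_concat, hp]
    rw [dist_eq_length_of_adj_le hf q (by rw [hq, hfi, add_zero]), hq]

theorem gain_depthOne_root (hh : 1 ≤ h) (i : Fin m) :
    gain (CompleteTree m h) (depthOne hh i) (root m h) =
      (subtree i : Set (TreeVert m h)).ncard := by
  unfold gain
  congr 1
  ext u
  have := one_le_length_of_mem_subtree (i := i) (u := u)
  simp only [Set.mem_ofPred_eq, dist_depthOne, dist_root]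
  split_ifs <;> grind

theorem gain_root_depthOne (hh : 1 ≤ h) (i : Fin m) :
    gain (CompleteTree m h) (root m h) (depthOne hh i) =
      (subtree i : Set (TreeVert m h))ᶜ.ncard := by
  unfold gain
  congr 1
  ext u
  simp only [Set.mem_ofPred_eq, Set.mem_compl_iff, dist_depthOne, dist_root]
  split_ifs <;> grind

theorem gain_depthOne_depthOne (hh : 1 ≤ h) {i j : Fin m} (hij : i ≠ j) :
    gain (CompleteTree m h) (depthOne hh i) (depthOne hh j) =
      (subtree i : Set (TreeVert m h)).ncard := by
  unfold gain
  congr 1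
  ext u
  have := one_le_length_of_mem_subtree (i := i) (u := u)
  have := eq_of_mem_subtree (i := i) (j := j) (u := u)
  simp only [Set.mem_ofPred_eq, dist_depthOne]
  split_ifs <;> grind

theorem ncard_subtree (hh : 1 ≤ h) (i : Fin m) :
    (subtree i : Set (TreeVert m h)).ncard = ∑ k ∈ range h, m ^ k := by
  let e : (subtree i : Set (TreeVert m h)) ≃ {l : List (Fin m) // l.length ≤ h - 1} :=
    { toFun := fun u => ⟨u.1.1.dropLast, by have := u.1.2; simp; omega⟩
      invFun := fun l => ⟨⟨l.1 ++ [i], by have := l.2; simp; omega⟩, List.suffix_append _ _⟩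
      left_inv := by
        rintro ⟨u, t, ht⟩
        apply Subtype.ext; apply Subtype.ext
        simp [← ht]
      right_inv := fun l => by simp }
  rw [← Nat.card_coe_set_eq, Nat.card_congr e, Nat.card_list_length_le, Fintype.card_fin,
    Nat.sub_add_cancel hh]

theorem ncard_compl_subtree (hh : 1 ≤ h) (i : Fin m) :
    (subtree i : Set (TreeVert m h))ᶜ.ncard = m ^ h := by
  have := Set.ncard_add_ncard_compl (subtree i : Set (TreeVert m h))
  rw [ncard_subtree hh, show Nat.card (TreeVert m h) = _ from Nat.card_list_length_le (Fin m) h,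
    Fintype.card_fin, sum_range_succ] at this
  omega

theorem Gain_mu1_pureStrat (hh : 1 ≤ h) (y : TreeVert m h) :
    Gain (CompleteTree m h) (mu1 m h) (pureStrat y) =
      alpha1 m h * gain (CompleteTree m h) (root m h) y +
        beta1 m h * ∑ i, (gain (CompleteTree m h) (depthOne hh i) y : ℝ) := by
  let e : Option (Fin m) → TreeVert m h := fun
    | none => root m h
    | some i => depthOne hh i
  have he : Function.Injective e := by
    rintro (_ | i) (_ | j) hij <;> injection hij <;> simp_all
  have hsupp : ∀ x ∉ Set.range e, mu1 m h x * gain (CompleteTree m h) x y = 0 := by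
    intro x hx
    suffices mu1 m h x = 0 by rw [this, zero_mul]
    obtain ⟨l, hl⟩ := x
    match l with
    | [] => exact absurd ⟨none, rfl⟩ hx
    | [i] => exact absurd ⟨some i, rfl⟩ hx
    | _ :: _ :: _ => simp [mu1]
  rw [Gain_pureStrat, ← Fintype.sum_of_injective e he _ _ hsupp fun _ => rfl,
    Fintype.sum_option, mul_sum]
  simp [e, mu1, root, depthOne]

theorem sum_gain_depthOne_depthOne (hh : 1 ≤ h) (j : Fin m) :
    ∑ i, (gain (CompleteTree m h) (depthOne hh i) (depthOne hh j) : ℝ) =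
      (m - 1) * ∑ k ∈ range h, (m : ℝ) ^ k := by
  rw [← add_sum_erase _ _ (mem_univ j), gain_self, sum_congr rfl fun i hi => by
    rw [gain_depthOne_depthOne hh (ne_of_mem_erase hi), ncard_subtree hh],
    sum_erase_eq_sub (mem_univ j)]
  push_cast [sum_const, card_univ, Fintype.card_fin, nsmul_eq_mul]
  ring

end CompleteTree

open CompleteTree

theorem stmt_14_general (m h : ℕ) (v : TreeVert m h) (hv : v.1.length = 1) :
    Gain (CompleteTree m h) (mu1 m h) (pureStrat (root m h)) =
      Gain (CompleteTree m h) (mu1 m h) (pureStrat v) ∧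
    Gain (CompleteTree m h) (mu1 m h) (pureStrat v) =
      (m : ℝ) ^ (h + 1) * ((m : ℝ) ^ h - 1) /
        ((m : ℝ) ^ (h + 2) - (m : ℝ) ^ (h + 1) + (m : ℝ) ^ h - 1) := by
  obtain ⟨i, hi⟩ := List.length_eq_one_iff.mp hv
  have hh : 1 ≤ h := hv ▸ v.2
  obtain rfl : v = depthOne hh i := Subtype.ext hi
  set D : ℝ := (m : ℝ) ^ (h + 2) - (m : ℝ) ^ (h + 1) + (m : ℝ) ^ h - 1
  set S : ℝ := ∑ k ∈ range h, (m : ℝ) ^ k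
  have hS : ((m : ℝ) - 1) * S = m ^ h - 1 := by rw [mul_comm]; exact geom_sum_mul _ _
  have hroot :
      Gain (CompleteTree m h) (mu1 m h) (pureStrat (root m h)) = beta1 m h * (m * S) := by
    simp [Gain_mu1_pureStrat hh, gain_self, gain_depthOne_root, ncard_subtree hh, S]
  have hdepthOne : Gain (CompleteTree m h) (mu1 m h) (pureStrat (depthOne hh i)) =
      alpha1 m h * m ^ h + beta1 m h * ((m - 1) * S) := by
    rw [Gain_mu1_pureStrat hh, gain_root_depthOne, ncard_compl_subtree hh,
      sum_gain_depthOne_depthOne]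
    push_cast
    rfl
  -- `α₁` and `β₁` are chosen so that the two gains balance.
  have hbalance : beta1 m h * S = alpha1 m h * m ^ h := by
    unfold alpha1 beta1
    linear_combination (m : ℝ) ^ h / D * hS
  constructor
  · rw [hroot, hdepthOne]
    linear_combination hbalance
  · rw [hdepthOne, ← hbalance]
    unfold beta1
    linear_combination (m : ℝ) ^ (h + 1) / D * hS

/-- On the complete `m`-ary tree of height `h`, for every depth-1 vertex `v`,
`Gain(T, μ₁, Z(root)) = Gain(T, μ₁, Z(v)) = m^{h+1}(m^h-1)/(m^{h+2}-m^{h+1}+m^h-1)`. -/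
theorem stmt_14 (m h : ℕ) (hm : 2 ≤ m) (hh : 1 ≤ h)
    (v : TreeVert m h) (hv : v.1.length = 1) :
    Gain (CompleteTree m h) (mu1 m h) (pureStrat (root m h)) =
      Gain (CompleteTree m h) (mu1 m h) (pureStrat v) ∧
    Gain (CompleteTree m h) (mu1 m h) (pureStrat v) =
      (m : ℝ) ^ (h + 1) * ((m : ℝ) ^ h - 1) /
        ((m : ℝ) ^ (h + 2) - (m : ℝ) ^ (h + 1) + (m : ℝ) ^ h - 1) :=
  stmt_14_general m h v hv
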